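/- arXiv:2307.05594 — 3 statements merged into one kernel-verified Lean document; each statement's English description precedes it below -/
import Mathlib

section
/- There exists a constant C > 0 such that for every real y ≥ 1, the tail sum ∑_{m > y} 1/φ(m)² over positive integers m is at most C/y. -/
/-!
Since `(1 - 1/p)⁻² ≤ 1 + 6/p` for every prime `p`,
`(m/φ(m))² ≤ ∏_{p ∣ m} (1 + 6/p) = ∑_{d ∣ m} g(d)`, where `g(d) = ∏_{p ∣ d} 6/p` for squarefree `d`
and `g(d) = 0` otherwise. Writing `m = d k` and summing over `k > y/d` first,
`∑_{m > y} 1/φ(m)² ≤ ∑_d g(d)/d² ∑_{k > y/d} 1/k² ≤ (2/y) ∑_d g(d)/d`,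
and the last series converges because `g(d)/d = ∏_{p ∣ d} 6/p² ≪ d^{-3/2}`.
-/

open Finset
open scoped Nat

theorem Nat.prod_primeFactors_one_add {R : Type*} [CommSemiring R] (f : ℕ → R) {n : ℕ}
    (hn : n ≠ 0) :
    ∏ p ∈ n.primeFactors, (1 + f p) =
      ∑ d ∈ n.divisors with Squarefree d, ∏ p ∈ d.primeFactors, f p := by
  rw [prod_one_add, Nat.sum_divisors_filter_squarefree hn, Nat.factors_eq, List.toFinset_coe,
    Nat.toFinset_factors]
  refine sum_congr rfl fun t ht => ?_
  rw [t.prod_val, Function.id_def, Nat.primeFactors_prod fun p hp =>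
    Nat.prime_of_mem_primeFactors (mem_powerset.mp ht hp)]

lemma one_le_one_sub_inv_sq_mul_one_add_six_div {p : ℝ} (hp : 2 ≤ p) :
    1 ≤ (1 - p⁻¹) ^ 2 * (1 + 6 / p) := by
  have hp0 : 0 < p := by linarith
  rw [show (1 - p⁻¹) ^ 2 * (1 + 6 / p) = (p - 1) ^ 2 * (p + 6) / p ^ 3 by field_simp,
    le_div_iff₀ (by positivity)]
  nlinarith [mul_nonneg (sub_nonneg.mpr hp) hp0.le]

lemma sq_le_totient_sq_mul_prod_one_add_six_div (n : ℕ) :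
    (n : ℝ) ^ 2 ≤ (φ n : ℝ) ^ 2 * ∏ p ∈ n.primeFactors, (1 + 6 / (p : ℝ)) := by
  have htot : (φ n : ℝ) = n * ∏ p ∈ n.primeFactors, (1 - (p : ℝ)⁻¹) := by
    simpa using congrArg (Rat.cast : ℚ → ℝ) (Nat.totient_eq_mul_prod_factors n)
  have hprod : 1 ≤ ∏ p ∈ n.primeFactors, (1 - (p : ℝ)⁻¹) ^ 2 * (1 + 6 / (p : ℝ)) :=
    one_le_prod fun p hp => one_le_one_sub_inv_sq_mul_one_add_six_div
      (by exact_mod_cast (Nat.prime_of_mem_primeFactors hp).two_le)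
  rw [htot, mul_pow, mul_assoc, ← prod_pow, ← prod_mul_distrib]
  exact le_mul_of_one_le_right (by positivity) hprod

noncomputable def totientWeight (d : ℕ) : ℝ :=
  if Squarefree d then ∏ p ∈ d.primeFactors, (6 / p : ℝ) else 0

lemma totientWeight_nonneg (d : ℕ) : 0 ≤ totientWeight d := by
  unfold totientWeight
  split_ifs
  exacts [prod_nonneg fun _ _ => by positivity, le_rfl]

lemma sum_divisors_totientWeight {n : ℕ} (hn : n ≠ 0) :
    ∑ d ∈ n.divisors, totientWeight d = ∏ p ∈ n.primeFactors, (1 + 6 / (p : ℝ)) := by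
  rw [Nat.prod_primeFactors_one_add _ hn, sum_filter]
  rfl

lemma one_div_totient_sq_le {n : ℕ} (hn : n ≠ 0) :
    1 / (φ n : ℝ) ^ 2 ≤ (∑ d ∈ n.divisors, totientWeight d) / (n : ℝ) ^ 2 := by
  have hφ : 0 < (φ n : ℝ) := by exact_mod_cast Nat.totient_pos.mpr (Nat.pos_of_ne_zero hn)
  rw [div_le_div_iff₀ (by positivity) (by positivity), one_mul, sum_divisors_totientWeight hn,
    mul_comm]
  exact sq_le_totient_sq_mul_prod_one_add_six_div n

lemma six_div_sq_le {p : ℕ} (hp : p.Prime) :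
    6 / (p : ℝ) ^ 2 ≤ (if p < 36 then 6 else 1) * (p : ℝ) ^ (-(3 / 2 : ℝ)) := by
  have hp1 : (1 : ℝ) ≤ p := by exact_mod_cast hp.one_le
  have hp0 : (0 : ℝ) < p := by linarith
  have hsplit : (p : ℝ) ^ (-(3 / 2 : ℝ)) = (p : ℝ) ^ (1 / 2 : ℝ) / (p : ℝ) ^ 2 := by
    rw [eq_div_iff (by positivity), ← Real.rpow_natCast, ← Real.rpow_add hp0]
    norm_num
  rw [hsplit, mul_div_assoc', div_le_div_iff_of_pos_right (by positivity)]
  split_ifs with h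
  · exact le_mul_of_one_le_right (by norm_num) (Real.one_le_rpow hp1 (by norm_num))
  · rw [one_mul, show (6 : ℝ) = (36 : ℝ) ^ (1 / 2 : ℝ) by
      rw [show (36 : ℝ) = 6 ^ (2 : ℝ) by norm_num, ← Real.rpow_mul (by norm_num)]; norm_num]
    exact Real.rpow_le_rpow (by norm_num) (by exact_mod_cast not_lt.mp h) (by norm_num)

lemma prod_ite_lt_le_pow {a : ℝ} (ha : 1 ≤ a) (N : ℕ) (s : Finset ℕ) :
    ∏ p ∈ s, (if p < N then a else 1) ≤ a ^ N := by
  rw [prod_ite, prod_const, prod_const_one, mul_one]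
  refine pow_le_pow_right₀ ha ((card_le_card fun p hp => ?_).trans (card_range N).le)
  exact mem_range.mpr (mem_filter.mp hp).2

lemma totientWeight_div_self_le (d : ℕ) :
    totientWeight d / d ≤ 6 ^ 36 * (d : ℝ) ^ (-(3 / 2 : ℝ)) := by
  unfold totientWeight
  split_ifs with hd
  · have hprimes : ∀ p ∈ d.primeFactors, p.Prime := fun p hp => Nat.prime_of_mem_primeFactors hp
    have hd_eq : (d : ℝ) = ∏ p ∈ d.primeFactors, (p : ℝ) := by
      rw [← Nat.cast_prod, Nat.prod_primeFactors_of_squarefree hd]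
    calc (∏ p ∈ d.primeFactors, (6 / p : ℝ)) / d = ∏ p ∈ d.primeFactors, 6 / (p : ℝ) ^ 2 := by
          rw [hd_eq, ← prod_div_distrib]
          exact prod_congr rfl fun p _ => by rw [div_div, sq]
      _ ≤ ∏ p ∈ d.primeFactors, (if p < 36 then 6 else 1) * (p : ℝ) ^ (-(3 / 2 : ℝ)) :=
          prod_le_prod (fun _ _ => by positivity) fun p hp => six_div_sq_le (hprimes p hp)
      _ = (∏ p ∈ d.primeFactors, if p < 36 then (6 : ℝ) else 1) * (d : ℝ) ^ (-(3 / 2 : ℝ)) := by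
          rw [prod_mul_distrib, hd_eq, Real.finsetProd_rpow _ _ fun _ _ => by positivity]
      _ ≤ 6 ^ 36 * (d : ℝ) ^ (-(3 / 2 : ℝ)) := by
          gcongr
          exact prod_ite_lt_le_pow (by norm_num) 36 _
  · rw [zero_div]
    positivity

lemma summable_totientWeight_div_self : Summable fun d : ℕ => totientWeight d / d :=
  (Summable.mul_left _ (Real.summable_nat_rpow.mpr (by norm_num))).of_nonneg_of_le
    (fun d => div_nonneg (totientWeight_nonneg d) d.cast_nonneg) totientWeight_div_self_le

lemma tsum_ite_lt_ofReal_one_div_sq_le {x : ℝ} (hx : 0 < x) :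
    ∑' k : ℕ, (if x < k then ENNReal.ofReal (1 / (k : ℝ) ^ 2) else 0) ≤ ENNReal.ofReal (2 / x) := by
  refine ENNReal.tsum_le_of_sum_range_le fun N => ?_
  rw [← sum_filter, ← ENNReal.ofReal_sum_of_nonneg fun _ _ => by positivity]
  refine ENNReal.ofReal_le_ofReal ?_
  calc ∑ k ∈ (range N).filter (fun k : ℕ => x < k), 1 / (k : ℝ) ^ 2
        ≤ ∑ k ∈ Ioo ⌊x⌋₊ N, ((k : ℝ) ^ 2)⁻¹ := by
        simp_rw [one_div]
        refine sum_le_sum_of_subset_of_nonneg (fun k hk => ?_) fun _ _ _ => by positivity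
        obtain ⟨hkN, hxk⟩ := mem_filter.mp hk
        exact mem_Ioo.mpr ⟨(Nat.floor_lt hx.le).mpr hxk, mem_range.mp hkN⟩
    _ ≤ 2 / (⌊x⌋₊ + 1) := sum_Ioo_inv_sq_le _ _
    _ ≤ 2 / x := div_le_div_of_nonneg_left (by norm_num) hx (Nat.lt_floor_add_one x).le

lemma ENNReal.tsum_sum_divisorsAntidiagonal (F : ℕ × ℕ → ENNReal)
    (hF : ∀ x : ℕ × ℕ, x.1 * x.2 = 0 → F x = 0) :
    ∑' m : ℕ, ∑ x ∈ m.divisorsAntidiagonal, F x = ∑' x, F x := by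
  rw [← ENNReal.tsum_fiberwise F fun x => x.1 * x.2]
  refine tsum_congr fun m => ?_
  rcases eq_or_ne m 0 with rfl | hm
  · rw [Nat.divisorsAntidiagonal_zero, sum_empty, eq_comm, ENNReal.tsum_eq_zero]
    exact fun x => hF x x.2
  · rw [← Finset.tsum_subtype]
    exact tsum_congr_set_coe F (by ext; simp [hm])

lemma tsum_ofReal_sum_divisors_div_sq_le {g : ℕ → ℝ} (hg : ∀ d, 0 ≤ g d) {y : ℝ} (hy : 0 < y) :
    ∑' m : {m : ℕ // y < m}, ENNReal.ofReal ((∑ d ∈ m.1.divisors, g d) / (m : ℝ) ^ 2) ≤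
      (∑' d, ENNReal.ofReal (g d / d)) * ENNReal.ofReal (2 / y) := by
  set H : ℕ × ℕ → ENNReal := fun x =>
    if y < ((x.1 * x.2 : ℕ) : ℝ) then ENNReal.ofReal (g x.1 / ((x.1 * x.2 : ℕ) : ℝ) ^ 2) else 0
  have hfiber (m : ℕ) : {m : ℕ | y < m}.indicator
      (fun m => ENNReal.ofReal ((∑ d ∈ m.divisors, g d) / (m : ℝ) ^ 2)) m =
      ∑ x ∈ m.divisorsAntidiagonal, H x := by
    by_cases hm : y < m
    · rw [Set.indicator_of_mem (s := {m : ℕ | y < m}) hm, sum_div,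
        ENNReal.ofReal_sum_of_nonneg fun d _ => div_nonneg (hg d) (by positivity)]
      rw [← Nat.sum_divisorsAntidiagonal fun d _ => ENNReal.ofReal (g d / (m : ℝ) ^ 2)]
      refine sum_congr rfl fun x hx => ?_
      simp only [H, (Nat.mem_divisorsAntidiagonal.mp hx).1, if_pos hm]
    · rw [Set.indicator_of_notMem (s := {m : ℕ | y < m}) hm]
      refine (sum_eq_zero fun x hx => ?_).symm
      simp only [H, (Nat.mem_divisorsAntidiagonal.mp hx).1, if_neg hm]
  have hinner (d : ℕ) : ∑' k, H (d, k) ≤ ENNReal.ofReal (g d / d) * ENNReal.ofReal (2 / y) := by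
    rcases eq_or_ne d 0 with rfl | hd
    · simp [H, hy.not_gt]
    have hd0 : (0 : ℝ) < d := by exact_mod_cast Nat.pos_of_ne_zero hd
    have hH (k : ℕ) : H (d, k) = ENNReal.ofReal (g d / (d : ℝ) ^ 2) *
        if y / d < k then ENNReal.ofReal (1 / (k : ℝ) ^ 2) else 0 := by
      simp only [H, div_lt_iff₀' hd0, Nat.cast_mul]
      split_ifs
      · rw [← ENNReal.ofReal_mul (div_nonneg (hg d) (by positivity))]
        congr 1
        ring
      · rw [mul_zero]
    calc ∑' k, H (d, k) ≤ ENNReal.ofReal (g d / (d : ℝ) ^ 2) * ENNReal.ofReal (2 / (y / d)) := by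
          simp_rw [hH, ENNReal.tsum_mul_left]
          gcongr
          exact tsum_ite_lt_ofReal_one_div_sq_le (by positivity)
      _ = ENNReal.ofReal (g d / d) * ENNReal.ofReal (2 / y) := by
          rw [← ENNReal.ofReal_mul (div_nonneg (hg d) (by positivity)),
            ← ENNReal.ofReal_mul (div_nonneg (hg d) (by positivity))]
          congr 1
          field_simp
  calc _ = ∑' m : ℕ, ∑ x ∈ m.divisorsAntidiagonal, H x :=
        (tsum_subtype {m : ℕ | y < m} _).trans (tsum_congr hfiber)
    _ = ∑' d, ∑' k, H (d, k) := by
        rw [ENNReal.tsum_sum_divisorsAntidiagonal H fun x hx => by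
            simp only [H, hx, Nat.cast_zero, hy.not_gt, if_false],
          ENNReal.tsum_prod (f := fun d k => H (d, k))]
    _ ≤ ∑' d, ENNReal.ofReal (g d / d) * ENNReal.ofReal (2 / y) := ENNReal.tsum_le_tsum hinner
    _ = (∑' d, ENNReal.ofReal (g d / d)) * ENNReal.ofReal (2 / y) := ENNReal.tsum_mul_right

lemma tsum_le_of_tsum_ofReal_le {ι : Type*} {f : ι → ℝ} {c : ℝ} (hf : ∀ i, 0 ≤ f i) (hc : 0 ≤ c)
    (h : ∑' i, ENNReal.ofReal (f i) ≤ ENNReal.ofReal c) : ∑' i, f i ≤ c :=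
  calc ∑' i, f i = (∑' i, ENNReal.ofReal (f i)).toReal := by
        rw [ENNReal.tsum_toReal_eq fun _ => ENNReal.ofReal_ne_top]
        exact tsum_congr fun i => (ENNReal.toReal_ofReal (hf i)).symm
    _ ≤ c := ENNReal.toReal_le_of_le_ofReal hc h

/-- There is a constant `C > 0` such that for every real `y ≥ 1`,
`∑_{m > y} 1/φ(m)² ≤ C/y`. -/
theorem tail_sum_one_div_totient_sq_le :
    ∃ C : ℝ, 0 < C ∧ ∀ y : ℝ, 1 ≤ y →
      (∑' m : {m : ℕ // y < (m : ℝ)}, 1 / ((Nat.totient m.1 : ℝ)) ^ 2) ≤ C / y := by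
  set κ := ∑' d, totientWeight d / d
  have hκ : 0 < κ := summable_totientWeight_div_self.tsum_pos
    (fun d => div_nonneg (totientWeight_nonneg d) d.cast_nonneg) 1 (by simp [totientWeight])
  refine ⟨2 * κ, by positivity, fun y hy => ?_⟩
  have hy0 : 0 < y := by linarith
  refine tsum_le_of_tsum_ofReal_le (fun _ => by positivity) (by positivity) ?_
  calc ∑' m : {m : ℕ // y < m}, ENNReal.ofReal (1 / (φ m.1 : ℝ) ^ 2)
      ≤ ∑' m : {m : ℕ // y < m},
          ENNReal.ofReal ((∑ d ∈ m.1.divisors, totientWeight d) / (m : ℝ) ^ 2) :=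
        ENNReal.tsum_le_tsum fun m => ENNReal.ofReal_le_ofReal <|
          one_div_totient_sq_le (Nat.cast_pos.mp (hy0.trans m.2)).ne'
    _ ≤ (∑' d, ENNReal.ofReal (totientWeight d / d)) * ENNReal.ofReal (2 / y) :=
        tsum_ofReal_sum_divisors_div_sq_le totientWeight_nonneg hy0
    _ = ENNReal.ofReal (2 * κ / y) := by
        rw [← ENNReal.ofReal_tsum_of_nonneg
          (fun d => div_nonneg (totientWeight_nonneg d) d.cast_nonneg)
          summable_totientWeight_div_self, ← ENNReal.ofReal_mul hκ.le]
        ring_nf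
end

section
/- There exist constants C > 0 and x₀ > 0 such that for every real x ≥ x₀ and every real y with 3 ≤ y ≤ √x, one has ∑_{y < m ≤ √x + 1} 1/(m² · φ(m) · log(9x/m²)) ≤ C/(y² · log(9x/y²)), where the sum is over all positive integers m in the indicated range. -/
/-!
While `log (9x/t²) ≥ 2`, the function `t ↦ t log (9x/t²)` is increasing, so each term is at most
`1/(m φ(m)) · 1/(y log (9x/y²))`, and it remains to bound the tail `∑_{m > y} 1/(m φ(m))` by
`O(1/y)`. Multiplicativity gives `φ(m) σ(m) ≥ m² ∏_{p ∣ m} (1 - p⁻²) ≥ m²/4`, hence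
`1/(m φ(m)) ≤ 4 σ(m)/m³ = 4 ∑_{dk = m} 1/(d³k²)`; summing over `k > y/d` first costs
`2/(y d²)` for each `d`.
-/

open Finset Real
open scoped ArithmeticFunction.sigma Nat

theorem one_sub_sum_le_prod_one_sub {ι R : Type*} [CommRing R] [LinearOrder R]
    [IsStrictOrderedRing R] (s : Finset ι) {f : ι → R}
    (h0 : ∀ i ∈ s, 0 ≤ f i) (h1 : ∀ i ∈ s, f i ≤ 1) :
    1 - ∑ i ∈ s, f i ≤ ∏ i ∈ s, (1 - f i) := by
  induction s using Finset.cons_induction with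
  | empty => simp
  | cons a s ha ih =>
    simp only [forall_mem_cons] at h0 h1
    rw [sum_cons, prod_cons]
    have hs : 0 ≤ ∑ i ∈ s, f i := sum_nonneg h0.2
    nlinarith [ih h0.2 h1.2, h0.1, h1.1]

theorem sum_primeFactors_inv_sq_le (n : ℕ) :
    ∑ p ∈ n.primeFactors, ((p : ℝ) ^ 2)⁻¹ ≤ 3 / 4 := by
  have hsub : n.primeFactors ⊆ insert 2 (Ioc 2 (n + 2)) := fun p hp => by
    have := (Nat.prime_of_mem_primeFactors hp).two_le
    have := Nat.le_of_mem_primeFactors hp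
    simp only [mem_insert, mem_Ioc]
    omega
  calc ∑ p ∈ n.primeFactors, ((p : ℝ) ^ 2)⁻¹
      ≤ ∑ p ∈ insert 2 (Ioc 2 (n + 2)), ((p : ℝ) ^ 2)⁻¹ :=
        sum_le_sum_of_subset_of_nonneg hsub fun _ _ _ => by positivity
    _ = 4⁻¹ + ∑ p ∈ Ioc 2 (n + 2), ((p : ℝ) ^ 2)⁻¹ := by
        rw [sum_insert (by simp)]; norm_num
    _ ≤ 4⁻¹ + (2⁻¹ - ((n + 2 : ℕ) : ℝ)⁻¹) := by
        gcongr; exact_mod_cast sum_Ioc_inv_sq_le_sub (α := ℝ) two_ne_zero (by omega)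
    _ ≤ 3 / 4 := by
        have : (0 : ℝ) ≤ ((n + 2 : ℕ) : ℝ)⁻¹ := by positivity
        linarith

theorem quarter_le_prod_primeFactors_one_sub_inv_sq (n : ℕ) :
    1 / 4 ≤ ∏ p ∈ n.primeFactors, (1 - ((p : ℝ) ^ 2)⁻¹) := by
  have h := one_sub_sum_le_prod_one_sub n.primeFactors (f := fun p => ((p : ℝ) ^ 2)⁻¹)
    (fun _ _ => by positivity) fun p hp => inv_le_one_of_one_le₀ <|
      one_le_pow₀ (by exact_mod_cast (Nat.prime_of_mem_primeFactors hp).one_le)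
  linarith [sum_primeFactors_inv_sq_le n]

theorem sq_mul_one_sub_inv_sq_le_totient_mul_sigma_prime_pow {p : ℕ} (hp : p.Prime) (k : ℕ) :
    ((p : ℝ) ^ (k + 1)) ^ 2 * (1 - ((p : ℝ) ^ 2)⁻¹) ≤ φ (p ^ (k + 1)) * σ 1 (p ^ (k + 1)) := by
  have hp0 : (0 : ℝ) < p := by exact_mod_cast hp.pos
  have hsigma : (p : ℝ) ^ k * (p + 1) ≤ σ 1 (p ^ (k + 1)) := by
    rw [ArithmeticFunction.sigma_one_apply_prime_pow hp]
    push_cast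
    rw [sum_range_succ, sum_range_succ]
    have : (0 : ℝ) ≤ ∑ i ∈ range k, (p : ℝ) ^ i := by positivity
    nlinarith [pow_succ (p : ℝ) k]
  rw [Nat.totient_prime_pow_succ hp]
  push_cast [Nat.cast_sub hp.one_le]
  calc ((p : ℝ) ^ (k + 1)) ^ 2 * (1 - ((p : ℝ) ^ 2)⁻¹)
      = (p : ℝ) ^ k * (p - 1) * ((p : ℝ) ^ k * (p + 1)) := by field_simp; ring
    _ ≤ (p : ℝ) ^ k * (p - 1) * σ 1 (p ^ (k + 1)) := by
        have : (1 : ℝ) ≤ p := by exact_mod_cast hp.one_le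
        gcongr

theorem sq_mul_prod_le_totient_mul_sigma (n : ℕ) :
    (n : ℝ) ^ 2 * ∏ p ∈ n.primeFactors, (1 - ((p : ℝ) ^ 2)⁻¹) ≤ φ n * σ 1 n := by
  rcases eq_or_ne n 0 with rfl | hn
  · simp
  have hmul : ((φ n * σ 1 n : ℕ) : ℝ) = ∏ p ∈ n.primeFactors,
      ((φ (p ^ n.factorization p) * σ 1 (p ^ n.factorization p) : ℕ) : ℝ) := by
    rw [Nat.multiplicative_factorization (fun m => φ m * σ 1 m) (fun a b hab => by
        simp only [Nat.totient_mul hab,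
          ArithmeticFunction.isMultiplicative_sigma.map_mul_of_coprime hab]
        ring)
      (by simp) hn, Finsupp.prod, Nat.support_factorization, Nat.cast_prod]
  have hpow : (n : ℝ) = ∏ p ∈ n.primeFactors, ((p : ℝ) ^ n.factorization p) := by
    conv_lhs => rw [← Nat.prod_factorization_pow_eq_self hn]
    rw [Finsupp.prod, Nat.support_factorization]; push_cast; rfl
  push_cast at hmul
  rw [hmul, hpow, ← prod_pow, ← prod_mul_distrib]
  refine prod_le_prod (fun p hp => ?_) fun p hp => ?_
  · have : 0 ≤ 1 - ((p : ℝ) ^ 2)⁻¹ := sub_nonneg.2 <| inv_le_one_of_one_le₀ <|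
      one_le_pow₀ (by exact_mod_cast (Nat.prime_of_mem_primeFactors hp).one_le)
    positivity
  · have hp' := Nat.prime_of_mem_primeFactors hp
    obtain ⟨k, hk⟩ := Nat.exists_eq_add_one_of_ne_zero
      (hp'.factorization_pos_of_dvd hn (Nat.dvd_of_mem_primeFactors hp)).ne'
    rw [hk]
    exact_mod_cast sq_mul_one_sub_inv_sq_le_totient_mul_sigma_prime_pow hp' k

-- The ascription `(k : ℕ)` in the filter keeps `k` in `ℕ`; without it `s` is coerced to `Finset ℝ`.
theorem sum_inv_sq_filter_lt_le {u : ℝ} (hu : 0 < u) (s : Finset ℕ) :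
    ∑ k ∈ s with u < (k : ℕ), ((k : ℝ) ^ 2)⁻¹ ≤ 2 / u := by
  have hsub : s.filter (fun k : ℕ => u < k) ⊆ Ioo ⌊u⌋₊ (s.sup id + 1) := fun k hk => by
    rw [mem_filter] at hk
    have := (Nat.floor_lt hu.le).2 hk.2
    have := le_sup (f := id) hk.1
    simp only [mem_Ioo, id] at *
    omega
  calc ∑ k ∈ s with u < (k : ℕ), ((k : ℝ) ^ 2)⁻¹
      ≤ ∑ k ∈ Ioo ⌊u⌋₊ (s.sup id + 1), ((k : ℝ) ^ 2)⁻¹ :=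
        sum_le_sum_of_subset_of_nonneg hsub fun _ _ _ => by positivity
    _ ≤ 2 / (⌊u⌋₊ + 1) := sum_Ioo_inv_sq_le _ _
    _ ≤ 2 / u := by gcongr; exact (Nat.lt_floor_add_one u).le

theorem sigma_one_div_cube_eq_sum (m : ℕ) :
    (σ 1 m : ℝ) / m ^ 3 = ∑ p ∈ m.divisorsAntidiagonal, ((p.1 : ℝ) ^ 3 * p.2 ^ 2)⁻¹ := by
  rw [ArithmeticFunction.sigma_one_apply, ← Nat.sum_divisorsAntidiagonal' (fun _ k => k),
    Nat.cast_sum, sum_div]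
  refine sum_congr rfl fun p hp => ?_
  obtain ⟨rfl, hm⟩ := Nat.mem_divisorsAntidiagonal.1 hp
  have : (p.2 : ℝ) ≠ 0 := by exact_mod_cast right_ne_zero_of_mul hm
  push_cast
  field_simp

theorem sum_inv_cube_mul_inv_sq_filter_lt_le {y : ℝ} (hy : 0 < y) {d : ℕ} (hd : d ≠ 0)
    (s : Finset ℕ) :
    ∑ k ∈ s with y < (d * k : ℕ), ((d : ℝ) ^ 3 * k ^ 2)⁻¹ ≤ 2 / y * ((d : ℝ) ^ 2)⁻¹ := by
  have hd₀ : (0 : ℝ) < d := by positivity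
  have hfilter : ∀ k : ℕ, y < ((d * k : ℕ) : ℝ) ↔ y / d < k := fun k => by
    rw [div_lt_iff₀' hd₀, Nat.cast_mul]
  simp_rw [hfilter, mul_inv, ← mul_sum]
  calc ((d : ℝ) ^ 3)⁻¹ * ∑ k ∈ s with y / d < (k : ℕ), ((k : ℝ) ^ 2)⁻¹
      ≤ ((d : ℝ) ^ 3)⁻¹ * (2 / (y / d)) := by
        gcongr; exact sum_inv_sq_filter_lt_le (by positivity) s
    _ = 2 / y * ((d : ℝ) ^ 2)⁻¹ := by field_simp

theorem sum_sigma_one_div_cube_le {y : ℝ} (hy : 0 < y) (s : Finset ℕ) :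
    ∑ m ∈ s with y < (m : ℕ), (σ 1 m : ℝ) / m ^ 3 ≤ 4 / y := by
  set t := s.filter (fun m : ℕ => y < m)
  set B := s.sup id
  have hdisj : (t : Set ℕ).PairwiseDisjoint Nat.divisorsAntidiagonal := fun a _ b _ hab =>
    disjoint_left.2 fun p hpa hpb =>
      hab ((Nat.mem_divisorsAntidiagonal.1 hpa).1.symm.trans (Nat.mem_divisorsAntidiagonal.1 hpb).1)
  have hsub : t.biUnion Nat.divisorsAntidiagonal ⊆
      {p ∈ Ioo 0 (B + 1) ×ˢ range (B + 1) | y < ((p.1 * p.2 : ℕ) : ℝ)} := fun p hp => by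
    obtain ⟨m, hm, hpm⟩ := mem_biUnion.1 hp
    obtain ⟨hms, hym⟩ := mem_filter.1 hm
    have hmB : m ≤ B := le_sup (f := id) hms
    have h1 := Nat.divisor_le (Nat.fst_mem_divisors_of_mem_antidiagonal hpm)
    have h2 := Nat.divisor_le (Nat.snd_mem_divisors_of_mem_antidiagonal hpm)
    have h0 := Nat.pos_of_mem_divisors (Nat.fst_mem_divisors_of_mem_antidiagonal hpm)
    obtain ⟨rfl, -⟩ := Nat.mem_divisorsAntidiagonal.1 hpm
    simp only [mem_filter, mem_product, mem_Ioo, mem_range]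
    exact ⟨⟨⟨h0, by omega⟩, by omega⟩, hym⟩
  calc ∑ m ∈ t, (σ 1 m : ℝ) / m ^ 3
      = ∑ m ∈ t, ∑ p ∈ m.divisorsAntidiagonal, ((p.1 : ℝ) ^ 3 * p.2 ^ 2)⁻¹ :=
        sum_congr rfl fun m _ => sigma_one_div_cube_eq_sum m
    _ = ∑ p ∈ t.biUnion Nat.divisorsAntidiagonal, ((p.1 : ℝ) ^ 3 * p.2 ^ 2)⁻¹ :=
        (sum_biUnion hdisj).symm
    _ ≤ ∑ p ∈ Ioo 0 (B + 1) ×ˢ range (B + 1) with y < ((p.1 * p.2 : ℕ) : ℝ),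
          ((p.1 : ℝ) ^ 3 * p.2 ^ 2)⁻¹ :=
        sum_le_sum_of_subset_of_nonneg hsub fun _ _ _ => by positivity
    _ = ∑ d ∈ Ioo 0 (B + 1), ∑ k ∈ range (B + 1) with y < (d * k : ℕ), ((d : ℝ) ^ 3 * k ^ 2)⁻¹ := by
        rw [sum_filter, sum_product]
        simp only [sum_filter, Nat.cast_mul]
    _ ≤ ∑ d ∈ Ioo 0 (B + 1), 2 / y * ((d : ℝ) ^ 2)⁻¹ :=
        sum_le_sum fun d hd =>
          sum_inv_cube_mul_inv_sq_filter_lt_le hy (mem_Ioo.1 hd).1.ne' _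
    _ ≤ 2 / y * 2 := by
        rw [← mul_sum]
        gcongr
        simpa using sum_Ioo_inv_sq_le (α := ℝ) 0 (B + 1)
    _ = 4 / y := by ring

theorem sq_le_four_mul_totient_mul_sigma (n : ℕ) : (n : ℝ) ^ 2 ≤ 4 * φ n * σ 1 n := by
  nlinarith [quarter_le_prod_primeFactors_one_sub_inv_sq n, sq_mul_prod_le_totient_mul_sigma n,
    sq_nonneg (n : ℝ)]

theorem inv_mul_totient_le (m : ℕ) : ((m : ℝ) * φ m)⁻¹ ≤ 4 * ((σ 1 m : ℝ) / m ^ 3) := by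
  rcases eq_or_ne m 0 with rfl | hm
  · simp
  have hφ : (0 : ℝ) < φ m := by exact_mod_cast Nat.totient_pos.2 (Nat.pos_of_ne_zero hm)
  have hm : (0 : ℝ) < m := by positivity
  calc ((m : ℝ) * φ m)⁻¹ = (m : ℝ) ^ 2 / (m ^ 3 * φ m) := by field_simp
    _ ≤ 4 * φ m * σ 1 m / (m ^ 3 * φ m) := by gcongr; exact sq_le_four_mul_totient_mul_sigma m
    _ = 4 * ((σ 1 m : ℝ) / m ^ 3) := by field_simp

theorem sum_inv_mul_totient_filter_lt_le {y : ℝ} (hy : 0 < y) (s : Finset ℕ) :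
    ∑ m ∈ s with y < (m : ℕ), ((m : ℝ) * φ m)⁻¹ ≤ 16 / y :=
  calc ∑ m ∈ s with y < (m : ℕ), ((m : ℝ) * φ m)⁻¹
      ≤ ∑ m ∈ s with y < (m : ℕ), 4 * ((σ 1 m : ℝ) / m ^ 3) :=
        sum_le_sum fun m _ => inv_mul_totient_le m
    _ ≤ 4 * (4 / y) := by rw [← mul_sum]; gcongr; exact sum_sigma_one_div_cube_le hy s
    _ = 16 / y := by ring

theorem mul_log_div_sq_le_mul_log_div_sq {a y t : ℝ} (ha : 0 < a) (hy : 0 < y) (hyt : y ≤ t)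
    (ht : 2 ≤ log (a / t ^ 2)) : y * log (a / y ^ 2) ≤ t * log (a / t ^ 2) := by
  have ht₀ : 0 < t := hy.trans_le hyt
  have hsplit : log (a / y ^ 2) = log (a / t ^ 2) + 2 * log (t / y) := by
    rw [log_div ha.ne' (by positivity), log_div ha.ne' (by positivity), log_div ht₀.ne' hy.ne',
      log_pow, log_pow]
    push_cast
    ring
  have hlog : y * log (t / y) ≤ t - y := by
    have := log_le_sub_one_of_pos (div_pos ht₀ hy)
    calc y * log (t / y) ≤ y * (t / y - 1) := by gcongr
      _ = t - y := by field_simp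
  rw [hsplit]
  nlinarith

theorem two_le_log_nine_mul_div_sq {x t : ℝ} (hx : 400 ≤ x) (ht : 0 < t) (htx : t ≤ √x + 1) :
    2 ≤ log (9 * x / t ^ 2) := by
  have hsqrt : 20 ≤ √x := le_sqrt_of_sq_le (by linarith)
  have hsq : √x ^ 2 = x := sq_sqrt (by linarith)
  have hexp : exp 2 ≤ 8 := by
    have := exp_one_lt_d9
    rw [show (2 : ℝ) = 1 + 1 by norm_num, exp_add]
    nlinarith [exp_pos 1]
  have h8 : 8 * t ^ 2 ≤ 9 * x := by nlinarith
  calc (2 : ℝ) = log (exp 2) := (log_exp 2).symm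
    _ ≤ log (9 * x / t ^ 2) := by
        gcongr
        rw [le_div_iff₀ (by positivity)]
        nlinarith [mul_le_mul_of_nonneg_right hexp (sq_nonneg t)]

theorem inv_sq_mul_totient_mul_log_le {x y : ℝ} (hx : 400 ≤ x) (hy : 0 < y) {m : ℕ}
    (hym : y < m) (hmx : (m : ℝ) ≤ √x + 1) :
    ((m : ℝ) ^ 2 * φ m * log (9 * x / m ^ 2))⁻¹ ≤
      ((m : ℝ) * φ m)⁻¹ * (y * log (9 * x / y ^ 2))⁻¹ := by
  have hm : (0 : ℝ) < m := hy.trans hym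
  have hLy := two_le_log_nine_mul_div_sq hx hy (by linarith)
  have hmono := mul_log_div_sq_le_mul_log_div_sq (by linarith) hy hym.le
    (two_le_log_nine_mul_div_sq hx hm hmx)
  rw [show (m : ℝ) ^ 2 * φ m * log (9 * x / m ^ 2) = (m * φ m) * (m * log (9 * x / m ^ 2)) by
    ring, mul_inv]
  exact mul_le_mul_of_nonneg_left (inv_anti₀ (by positivity) hmono) (by positivity)

/-- There are constants `C > 0` and `x₀ > 0` such that for every `x ≥ x₀` and every real
`y` with `3 ≤ y ≤ √x`, one has
`∑_{y < m ≤ √x + 1} 1/(m² · φ(m) · log(9x/m²)) ≤ C/(y² · log(9x/y²))`. -/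
theorem sum_middle_range_le :
    ∃ C : ℝ, 0 < C ∧ ∃ x₀ : ℝ, 0 < x₀ ∧ ∀ x : ℝ, x₀ ≤ x → ∀ y : ℝ, 3 ≤ y →
      y ≤ Real.sqrt x →
      (∑' m : ℕ, if y < (m : ℝ) ∧ (m : ℝ) ≤ Real.sqrt x + 1 then
          1 / ((m : ℝ) ^ 2 * (Nat.totient m : ℝ) * Real.log (9 * x / (m : ℝ) ^ 2))
        else 0)
      ≤ C / (y ^ 2 * Real.log (9 * x / y ^ 2)) := by
  refine ⟨16, by norm_num, 400, by norm_num, fun x hx y hy hyx => ?_⟩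
  have hy₀ : 0 < y := by linarith
  have hLy := two_le_log_nine_mul_div_sq hx hy₀ (by linarith)
  set Ly := log (9 * x / y ^ 2)
  have hterm : ∀ m : ℕ,
      (if y < (m : ℝ) ∧ (m : ℝ) ≤ √x + 1 then
        1 / ((m : ℝ) ^ 2 * φ m * log (9 * x / (m : ℝ) ^ 2)) else 0) ≤
      if y < (m : ℝ) then ((m : ℝ) * φ m)⁻¹ * (y * Ly)⁻¹ else 0 := fun m => by
    split_ifs with hm hym
    · rw [one_div]; exact inv_sq_mul_totient_mul_log_le hx hy₀ hm.1 hm.2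
    · exact absurd hm.1 hym
    · positivity
    · rfl
  rw [tsum_eq_sum (s := range (⌊√x + 1⌋₊ + 1)) fun m hm =>
    if_neg fun h => hm (mem_range.2 (Nat.lt_succ_of_le (Nat.le_floor h.2)))]
  calc _ ≤ ∑ m ∈ range (⌊√x + 1⌋₊ + 1),
        if y < (m : ℝ) then ((m : ℝ) * φ m)⁻¹ * (y * Ly)⁻¹ else 0 := sum_le_sum fun m _ => hterm m
    _ = (∑ m ∈ range (⌊√x + 1⌋₊ + 1) with y < (m : ℕ), ((m : ℝ) * φ m)⁻¹) * (y * Ly)⁻¹ := by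
        rw [sum_mul, sum_filter]
    _ ≤ 16 / y * (y * Ly)⁻¹ := by gcongr; exact sum_inv_mul_totient_filter_lt_le hy₀ _
    _ = 16 / (y ^ 2 * Ly) := by field_simp
end

section
/- Let G be a finite group and let N be an abelian normal subgroup of G with index [G : N] = 2. Then every irreducible finite-dimensional complex representation of G has dimension at most 2. -/
/-!
Since `N` is abelian, the operators `ρ n`, `n ∈ N`, commute and so share an eigenvector `v`.
For any `g ∉ N` we have `G = N ∪ gN`, so `span {v, ρ g v}` is `G`-stable; by irreducibility
it is everything, and it has dimension at most 2.
-/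

open Module Set CategoryTheory

theorem Module.End.exists_forall_apply_eq_smul_of_commute {K M ι : Type*} [Field K]
    [IsAlgClosed K] [AddCommGroup M] [Module K M] [FiniteDimensional K M] [Nontrivial M]
    (f : ι → End K M) (hf : ∀ i j, Commute (f i) (f j)) :
    ∃ v : M, v ≠ 0 ∧ ∀ i, ∃ c : K, f i v = c • v := by
  obtain ⟨W, ⟨hW0, hWf⟩, hWmin⟩ := (wellFounded_lt (α := Submodule K M)).has_min
    {W | W ≠ ⊥ ∧ ∀ i, MapsTo (f i) W W} ⟨⊤, top_ne_bot, fun _ => mapsTo_univ _ _⟩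
  -- `W` is a minimal nonzero invariant subspace; it meets each eigenspace of `f i` in another
  -- invariant subspace, so `f i` acts on `W` by a scalar.
  have hW_eigen : ∀ i, ∃ μ, W ≤ (f i).eigenspace μ := by
    intro i
    have : Nontrivial W := Submodule.nontrivial_iff_ne_bot.mpr hW0
    obtain ⟨μ, hμ⟩ := End.exists_eigenvalue ((f i).restrict (hWf i))
    obtain ⟨x, hx⟩ := hμ.exists_hasEigenvector
    refine ⟨μ, by_contra fun hle => hWmin (W ⊓ (f i).eigenspace μ) ⟨?_, fun j => ?_⟩
      (inf_lt_left.mpr hle)⟩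
    · refine Submodule.ne_bot_iff _ |>.mpr ⟨x, ⟨x.2, ?_⟩, by simpa using hx.2⟩
      exact End.eigenspace_restrict_le_eigenspace _ _ _ ⟨x, hx.1, rfl⟩
    · exact (hWf j).inter_inter (mapsTo_genEigenspace_of_comm (hf i j) μ 1)
  obtain ⟨v, hvW, hv0⟩ := Submodule.exists_mem_ne_zero_of_ne_bot hW0
  exact ⟨v, hv0, fun i => (hW_eigen i).imp fun μ hμ => End.mem_eigenspace_iff.mp (hμ hvW)⟩

namespace Subrepresentation

variable {k G V : Type*} [CommSemiring k] [Group G] [AddCommMonoid V] [Module k V]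
  {ρ : Representation k G V} {N : Subgroup G} {g : G} {U : Submodule k V}

theorem map_le_sup_map_of_index_eq_two (hN : N.index = 2) (hg : g ∉ N)
    (hU : ∀ n ∈ N, U.map (ρ n) ≤ U) (x : G) : U.map (ρ x) ≤ U ⊔ U.map (ρ g) := by
  by_cases hx : x ∈ N
  · exact (hU x hx).trans le_sup_left
  · have hgx : g⁻¹ * x ∈ N := by simp [Subgroup.mul_mem_iff_of_index_two hN, hg, hx]
    calc U.map (ρ x) = (U.map (ρ (g⁻¹ * x))).map (ρ g) := by
          rw [← Submodule.map_comp, ← Module.End.mul_eq_comp, ← map_mul, mul_inv_cancel_left]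
      _ ≤ U.map (ρ g) := Submodule.map_mono (hU _ hgx)
      _ ≤ U ⊔ U.map (ρ g) := le_sup_right

def ofIndexEqTwo (hN : N.index = 2) (hg : g ∉ N) (hU : ∀ n ∈ N, U.map (ρ n) ≤ U) :
    Subrepresentation ρ where
  toSubmodule := U ⊔ U.map (ρ g)
  apply_mem_toSubmodule x := by
    suffices (U ⊔ U.map (ρ g)).map (ρ x) ≤ U ⊔ U.map (ρ g) from fun v hv => this ⟨v, hv, rfl⟩
    rw [Submodule.map_sup, ← Submodule.map_comp, ← Module.End.mul_eq_comp, ← map_mul]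
    exact sup_le (map_le_sup_map_of_index_eq_two hN hg hU x)
      (map_le_sup_map_of_index_eq_two hN hg hU (x * g))

end Subrepresentation

namespace FDRep

variable {k G : Type*} [Field k] [Monoid G] (V : FDRep k G) [Simple V]

theorem nontrivial_of_simple : Nontrivial V := by
  refine not_subsingleton_iff_nontrivial.mp fun _ => id_nonzero V ?_
  ext x
  exact Subsingleton.elim _ _

theorem isIrreducible_of_simple : Representation.IsIrreducible V.ρ := by
  have := nontrivial_of_simple V
  have : Nontrivial (Subrepresentation V.ρ) :=
    ⟨⊥, ⊤, fun h => bot_ne_top congr(Subrepresentation.toSubmodule $h)⟩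
  refine ⟨fun W => ?_⟩
  let ι : FDRep.of W.toRepresentation ⟶ V :=
    ⟨FGModuleCat.ofHom W.toSubmodule.subtype, fun _ => rfl⟩
  have : Mono ι := ConcreteCategory.mono_of_injective _ Subtype.val_injective
  by_cases hι : ι = 0
  · left
    ext v
    refine ⟨fun hv => ?_, fun hv => (show v = 0 from hv) ▸ W.toSubmodule.zero_mem⟩
    exact congr(ConcreteCategory.hom $hι ⟨v, hv⟩)
  · have := isIso_of_mono_of_nonzero hι
    right
    ext v
    obtain ⟨w, rfl⟩ := (ConcreteCategory.bijective_of_isIso ι).2 v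
    exact iff_of_true w.2 trivial

end FDRep

theorem finrank_le_two_of_abelian_normal_index_two_general (G : Type) [Group G]
    (N : Subgroup G)
    (hab : ∀ a b : G, a ∈ N → b ∈ N → a * b = b * a)
    (hidx : N.index = 2)
    (V : FDRep ℂ G) (hV : CategoryTheory.Simple V) :
    Module.finrank ℂ V ≤ 2 := by
  have := FDRep.nontrivial_of_simple V
  have := FDRep.isIrreducible_of_simple V
  obtain ⟨v, hv0, hv⟩ := End.exists_forall_apply_eq_smul_of_commute (fun n : N => V.ρ n)
    fun a b => by simp only [Commute, SemiconjBy, ← map_mul, hab a b a.2 b.2]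
  have hline : ∀ n ∈ N, (ℂ ∙ v).map (V.ρ n) ≤ ℂ ∙ v := fun n hn => by
    obtain ⟨c, hc⟩ := hv ⟨n, hn⟩
    rw [Submodule.map_span_le]
    simpa [hc] using Submodule.smul_mem _ c (Submodule.mem_span_singleton_self v)
  obtain ⟨g, hg⟩ : ∃ g, g ∉ N := SetLike.exists_not_mem_of_ne_top N (by rintro rfl; simp at hidx)
  set W := Subrepresentation.ofIndexEqTwo hidx hg hline
  have hvW : v ∈ W.toSubmodule := Submodule.mem_sup_left (Submodule.mem_span_singleton_self v)
  have hW : W = ⊤ := (IsSimpleOrder.eq_bot_or_eq_top W).resolve_left fun h =>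
    hv0 <| (Submodule.mem_bot ℂ).mp (by rwa [h] at hvW)
  calc finrank ℂ V = finrank ℂ W.toSubmodule := by rw [hW]; exact (finrank_top ℂ V).symm
    _ ≤ finrank ℂ (ℂ ∙ v) + finrank ℂ ((ℂ ∙ v).map (V.ρ g)) :=
      Submodule.finrank_add_le_finrank_add_finrank _ _
    _ ≤ 1 + 1 := add_le_add (finrank_span_singleton hv0).le
      ((Submodule.finrank_map_le _ _).trans (finrank_span_singleton hv0).le)

/-- If a finite group `G` has an abelian normal subgroup `N` of index 2, then every
irreducible finite-dimensional complex representation of `G` has dimension at most 2. -/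
theorem finrank_le_two_of_abelian_normal_index_two (G : Type) [Group G] [Fintype G]
    (N : Subgroup G) [N.Normal]
    (hab : ∀ a b : G, a ∈ N → b ∈ N → a * b = b * a)
    (hidx : N.index = 2)
    (V : FDRep ℂ G) (hV : CategoryTheory.Simple V) :
    Module.finrank ℂ V ≤ 2 :=
  finrank_le_two_of_abelian_normal_index_two_general G N hab hidx V hV
end
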